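/- For the bidiagonal skew-symmetric pair (A, C = e_1ᵀ, x₀ = e_1) with all a_k ≠ 0, the n×n Hankel matrix H with H_{ij} = e_1ᵀ A^{i+j} e_1 is invertible, while every (n+1)×(n+1) Hankel matrix with entries y(i+j) = e_1ᵀ A^{i+j} e_1 is singular. -/

import Mathlib

/-!
The Hankel matrix factors as `H = Oᵀ K`, where the columns of `K` are the Krylov vectors `Aʲ e₁`
and those of `O` are `(Aᵀ)ⁱ e₁`. Since `A` and `Aᵀ` are tridiagonal with nonzero subdiagonal,
`Aʲ e₁` is supported on the first `j + 1` coordinates with a nonzero `j`-th coordinate, so `K` and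
`O` are upper triangular with nonzero diagonal. One size up, the coefficients of the characteristic
polynomial give a nonzero kernel vector, because Cayley–Hamilton makes `y` satisfy the
corresponding linear recurrence.
-/

open Matrix Polynomial

namespace Matrix

variable {R ι : Type*}

def hankel (y : ℕ → R) (m : ℕ) : Matrix (Fin m) (Fin m) R :=
  of fun i j => y (i + j)

def krylovMatrix [CommSemiring R] [Fintype ι] [DecidableEq ι] (A : Matrix ι ι R) (v : ι → R)
    (m : ℕ) : Matrix ι (Fin m) R :=
  of fun k j => (A ^ (j : ℕ) *ᵥ v) k

theorem hankel_dotProduct_pow_mulVec [CommSemiring R] [Fintype ι] [DecidableEq ι]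
    (A : Matrix ι ι R) (u v : ι → R) (m : ℕ) :
    hankel (fun k => u ⬝ᵥ (A ^ k *ᵥ v)) m = (krylovMatrix Aᵀ u m)ᵀ * krylovMatrix A v m := by
  ext i j
  change u ⬝ᵥ (A ^ ((i : ℕ) + j) *ᵥ v) = (Aᵀ ^ (i : ℕ) *ᵥ u) ⬝ᵥ (A ^ (j : ℕ) *ᵥ v)
  rw [pow_add, ← mulVec_mulVec, dotProduct_mulVec, ← transpose_pow, mulVec_transpose]

section CayleyHamilton

variable [CommRing R] [Fintype ι] [DecidableEq ι]

theorem sum_dotProduct_pow_mulVec_mul_charpoly_coeff [Nontrivial R] (A : Matrix ι ι R)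
    (u v : ι → R) (i : ℕ) :
    ∑ j ∈ Finset.range (Fintype.card ι + 1), u ⬝ᵥ (A ^ (i + j) *ᵥ v) * A.charpoly.coeff j = 0 := by
  calc _ = u ⬝ᵥ ((A ^ i * aeval A A.charpoly) *ᵥ v) := by
        rw [aeval_eq_sum_range, charpoly_natDegree_eq_dim, Finset.mul_sum, sum_mulVec,
          dotProduct_sum]
        refine Finset.sum_congr rfl fun j _ => ?_
        rw [mul_smul_comm, ← pow_add, smul_mulVec, dotProduct_smul, smul_eq_mul, mul_comm]
    _ = 0 := by rw [aeval_self_charpoly, mul_zero, zero_mulVec, dotProduct_zero]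

theorem det_hankel_dotProduct_pow_mulVec_card_succ [IsDomain R] (A : Matrix ι ι R)
    (u v : ι → R) : (hankel (fun k => u ⬝ᵥ (A ^ k *ᵥ v)) (Fintype.card ι + 1)).det = 0 := by
  refine exists_mulVec_eq_zero_iff.mp ⟨fun j => A.charpoly.coeff j, fun h => ?_, ?_⟩
  · have hlast := congrFun h (Fin.last _)
    simp only [Fin.val_last, Pi.zero_apply] at hlast
    rw [← A.charpoly_natDegree_eq_dim, A.charpoly_monic.coeff_natDegree] at hlast
    exact one_ne_zero hlast
  · funext i
    rw [Pi.zero_apply, ← sum_dotProduct_pow_mulVec_mul_charpoly_coeff A u v i,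
      ← Fin.sum_univ_eq_sum_range (fun j => u ⬝ᵥ (A ^ ((i : ℕ) + j) *ᵥ v) * A.charpoly.coeff j)]
    rfl

end CayleyHamilton

section Hessenberg

variable [CommRing R] {n : ℕ} {A : Matrix (Fin n) (Fin n) R} {v : Fin n → R}

theorem pow_mulVec_apply_eq_zero_of_lt (hA : ∀ i j : Fin n, (j : ℕ) + 1 < i → A i j = 0)
    (hv : ∀ k : Fin n, (k : ℕ) ≠ 0 → v k = 0) (m : ℕ) (k : Fin n) (hk : m < k) :
    (A ^ m *ᵥ v) k = 0 := by
  induction m generalizing k with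
  | zero => rw [pow_zero, one_mulVec]; exact hv k (by omega)
  | succ m ih =>
    rw [pow_succ', ← mulVec_mulVec, mulVec_apply_eq_sum]
    refine Finset.sum_eq_zero fun l _ => ?_
    rcases lt_or_ge m l with hml | hlm
    · rw [ih l hml, mul_zero]
    · rw [hA k l (by omega), zero_mul]

theorem pow_succ_mulVec_apply_succ (hA : ∀ i j : Fin n, (j : ℕ) + 1 < i → A i j = 0)
    (hv : ∀ k : Fin n, (k : ℕ) ≠ 0 → v k = 0) (m : ℕ) (hm : m + 1 < n) :
    (A ^ (m + 1) *ᵥ v) ⟨m + 1, hm⟩ = A ⟨m + 1, hm⟩ ⟨m, by omega⟩ * (A ^ m *ᵥ v) ⟨m, by omega⟩ := by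
  rw [pow_succ', ← mulVec_mulVec, mulVec_apply_eq_sum]
  refine Finset.sum_eq_single _ (fun l _ hl => ?_) (by simp)
  rcases lt_or_gt_of_ne (Fin.val_ne_of_ne hl) with hlm | hml
  · rw [hA _ l (Nat.succ_lt_succ hlm), zero_mul]
  · rw [pow_mulVec_apply_eq_zero_of_lt hA hv m l hml, mul_zero]

theorem krylovMatrix_isUpperTriangular (hA : ∀ i j : Fin n, (j : ℕ) + 1 < i → A i j = 0)
    (hv : ∀ k : Fin n, (k : ℕ) ≠ 0 → v k = 0) : (krylovMatrix A v n).IsUpperTriangular :=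
  fun i j hij => pow_mulVec_apply_eq_zero_of_lt hA hv j i hij

variable [IsDomain R]

theorem pow_mulVec_apply_self_ne_zero (hA : ∀ i j : Fin n, (j : ℕ) + 1 < i → A i j = 0)
    (hsub : ∀ i j : Fin n, (i : ℕ) = j + 1 → A i j ≠ 0) (hv : ∀ k : Fin n, (k : ℕ) ≠ 0 → v k = 0)
    (hv₀ : ∀ k : Fin n, (k : ℕ) = 0 → v k ≠ 0) (k : Fin n) : (A ^ (k : ℕ) *ᵥ v) k ≠ 0 := by
  obtain ⟨m, hm⟩ := k
  induction m with
  | zero => simpa using hv₀ ⟨0, hm⟩ rfl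
  | succ m ih =>
    rw [pow_succ_mulVec_apply_succ hA hv m hm]
    exact mul_ne_zero (hsub _ _ rfl) (ih (by omega))

theorem det_krylovMatrix_ne_zero (hA : ∀ i j : Fin n, (j : ℕ) + 1 < i → A i j = 0)
    (hsub : ∀ i j : Fin n, (i : ℕ) = j + 1 → A i j ≠ 0) (hv : ∀ k : Fin n, (k : ℕ) ≠ 0 → v k = 0)
    (hv₀ : ∀ k : Fin n, (k : ℕ) = 0 → v k ≠ 0) : (krylovMatrix A v n).det ≠ 0 := by
  rw [det_of_isUpperTriangular (krylovMatrix_isUpperTriangular hA hv)]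
  exact Finset.prod_ne_zero_iff.mpr fun k _ => pow_mulVec_apply_self_ne_zero hA hsub hv hv₀ k

end Hessenberg

end Matrix

theorem hankel_invertible_and_next_singular_general (n : ℕ)
    (A : Matrix (Fin n) (Fin n) ℝ) (a : ℕ → ℝ)
    (hsub : ∀ i j : Fin n, (i : ℕ) = (j : ℕ) + 1 → A i j = a (j : ℕ))
    (hsup : ∀ i j : Fin n, (j : ℕ) = (i : ℕ) + 1 → A i j = -a (i : ℕ))
    (hzero : ∀ i j : Fin n, (i : ℕ) ≠ (j : ℕ) + 1 → (j : ℕ) ≠ (i : ℕ) + 1 → A i j = 0)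
    (hnz : ∀ k : ℕ, k + 1 < n → a k ≠ 0)
    (e₁ : Fin n → ℝ) (he₁ : e₁ = fun k : Fin n => if (k : ℕ) = 0 then 1 else 0)
    (y : ℕ → ℝ) (hy : ∀ k, y k = e₁ ⬝ᵥ (A ^ k *ᵥ e₁)) :
    IsUnit (Matrix.of fun (i j : Fin n) => y ((i : ℕ) + (j : ℕ)))
    ∧ (Matrix.of fun (i j : Fin (n + 1)) => y ((i : ℕ) + (j : ℕ))).det = 0 := by
  have hv : ∀ k : Fin n, (k : ℕ) ≠ 0 → e₁ k = 0 := fun k hk => by simp [he₁, hk]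
  have hv₀ : ∀ k : Fin n, (k : ℕ) = 0 → e₁ k ≠ 0 := fun k hk => by simp [he₁, hk]
  have hK : (krylovMatrix A e₁ n).det ≠ 0 :=
    det_krylovMatrix_ne_zero (fun i j h => hzero i j (by omega) (by omega))
      (fun i j h => hsub i j h ▸ hnz j (by omega)) hv hv₀
  have hKT : (krylovMatrix Aᵀ e₁ n).det ≠ 0 :=
    det_krylovMatrix_ne_zero (fun i j h => hzero j i (by omega) (by omega))
      (fun i j h => by rw [transpose_apply, hsup j i h, neg_ne_zero]; exact hnz j (by omega)) hv hv₀
  obtain rfl : y = fun k => e₁ ⬝ᵥ (A ^ k *ᵥ e₁) := funext hy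
  refine ⟨?_, ?_⟩
  · change IsUnit (hankel (fun k => e₁ ⬝ᵥ (A ^ k *ᵥ e₁)) n)
    rw [hankel_dotProduct_pow_mulVec, isUnit_iff_isUnit_det, det_mul, det_transpose,
      isUnit_iff_ne_zero]
    exact mul_ne_zero hKT hK
  · have h := det_hankel_dotProduct_pow_mulVec_card_succ A e₁ e₁
    rw [Fintype.card_fin] at h
    exact h

/-- For the bidiagonal skew-symmetric pair with `C = e₁ᵀ` and `x₀ = e₁`, the `n × n`
Hankel matrix with entries `y (i+j) = e₁ᵀ A^(i+j) e₁` is invertible, while the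
`(n+1) × (n+1)` Hankel matrix is singular. -/
theorem hankel_invertible_and_next_singular (n : ℕ) (hn : 0 < n)
    (A : Matrix (Fin n) (Fin n) ℝ) (a : ℕ → ℝ)
    (hsub : ∀ i j : Fin n, (i : ℕ) = (j : ℕ) + 1 → A i j = a (j : ℕ))
    (hsup : ∀ i j : Fin n, (j : ℕ) = (i : ℕ) + 1 → A i j = -a (i : ℕ))
    (hzero : ∀ i j : Fin n, (i : ℕ) ≠ (j : ℕ) + 1 → (j : ℕ) ≠ (i : ℕ) + 1 → A i j = 0)
    (hnz : ∀ k : ℕ, k + 1 < n → a k ≠ 0)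
    (e₁ : Fin n → ℝ) (he₁ : e₁ = fun k : Fin n => if (k : ℕ) = 0 then 1 else 0)
    (y : ℕ → ℝ) (hy : ∀ k, y k = e₁ ⬝ᵥ (A ^ k *ᵥ e₁)) :
    IsUnit (Matrix.of fun (i j : Fin n) => y ((i : ℕ) + (j : ℕ)))
    ∧ (Matrix.of fun (i j : Fin (n + 1)) => y ((i : ℕ) + (j : ℕ))).det = 0 :=
  hankel_invertible_and_next_singular_general n A a hsub hsup hzero hnz e₁ he₁ y hy
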